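/- arXiv:2311.15431 — 2 statements merged into one kernel-verified Lean document; each statement's English description precedes it below -/
import Mathlib

section
/- For all words u, v over a finite alphabet, h(u·v) ≤ max{ h(u) + ρ(v), ρ(u) + h(v) }. -/
variable {A : Type*}

/-- Simon's congruence of order `k`: `u` and `v` have the same subwords of length ≤ k. -/
def SimonCong (k : ℕ) (u v : List A) : Prop :=
  ∀ s : List A, s.length ≤ k → (s.Sublist u ↔ s.Sublist v)

/-- Subword distance `δ(u,v) = sup {k | u ∼ₖ v} ∈ ℕ∞`. -/
noncomputable def sdelta (u v : List A) : ℕ∞ :=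
  sSup {d : ℕ∞ | ∃ k : ℕ, d = k ∧ SimonCong k u v}

/-- Right side distance `r(u,t) = δ(u, u·t)`. -/
noncomputable def rdist (u t : List A) : ℕ∞ := sdelta u (u ++ t)

/-- Left side distance `ℓ(t,u) = δ(t·u, u)`. -/
noncomputable def ldist (t u : List A) : ℕ∞ := sdelta (t ++ u) u

/-- Piecewise complexity `h(u)`: least `n` such that any `v` with `u ∼ₙ v` equals `u`. -/
noncomputable def pcHeight (u : List A) : ℕ :=
  sInf {n : ℕ | ∀ v : List A, SimonCong n u v → v = u}

/-- `u` is `m`-reduced: no strict subword of `u` is `∼ₘ`-equivalent to `u`. -/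
def Reduced (m : ℕ) (u : List A) : Prop :=
  ∀ u' : List A, u'.Sublist u → u' ≠ u → ¬ SimonCong m u u'

/-- Piecewise minimality index `ρ(u)`: least `m` such that `u` is `m`-reduced. -/
noncomputable def pcRho (u : List A) : ℕ := sInf {m : ℕ | Reduced m u}

/-- An `A`-arch: contains every letter of `A` but no strict prefix does. -/
def IsArch (A : Type*) [Fintype A] (s : List A) : Prop :=
  (∀ a : A, a ∈ s) ∧ ∀ t : List A, t <+: s → t ≠ s → ∃ a : A, a ∉ t

/-- The infinite periodic word `u^ω`. -/
def omegaWord (u : List A) (hu : u ≠ []) (i : ℕ) : A :=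
  u.get ⟨i % u.length, Nat.mod_lt i (List.length_pos_iff.mpr hu)⟩

/-- The arch-jumping function `α` on `u^ω`: `α(i)` is the least `j > i` such that
every letter of `A` occurs among positions `i, …, j-1` of `u^ω`. -/
noncomputable def archJump (u : List A) (hu : u ≠ []) (i : ℕ) : ℕ :=
  sInf {j : ℕ | i < j ∧ ∀ a : A, ∃ m : ℕ, i ≤ m ∧ m < j ∧ omegaWord u hu m = a}

/-- `p` is an arch-period of `u` starting at `i`. -/
def IsArchPeriodAt (u : List A) (hu : u ≠ []) (i p : ℕ) : Prop :=
  0 < p ∧ ∃ k : ℕ, (archJump u hu)^[k + p] i ≡ (archJump u hu)^[k] i [MOD u.length]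

/-- The arch-period of `u`: the least arch-period starting at 0. -/
noncomputable def archPeriod (u : List A) (hu : u ≠ []) : ℕ :=
  sInf {p : ℕ | IsArchPeriodAt u hu 0 p}

/-- `K_u`: the least `k` with `α^{k+p}(0) ≡ α^k(0) (mod L)`. -/
noncomputable def archTransientIndex (u : List A) (hu : u ≠ []) : ℕ :=
  sInf {k : ℕ |
    (archJump u hu)^[k + archPeriod u hu] 0 ≡ (archJump u hu)^[k] 0 [MOD u.length]}

/-- The transient `T_u = α^{K_u}(0)`. -/
noncomputable def archTransient (u : List A) (hu : u ≠ []) : ℕ :=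
  (archJump u hu)^[archTransientIndex u hu] 0

/-- The span `Δ_u = α^{K_u+p_u}(0) − α^{K_u}(0)`. -/
noncomputable def archSpan (u : List A) (hu : u ≠ []) : ℕ :=
  (archJump u hu)^[archTransientIndex u hu + archPeriod u hu] 0 - archTransient u hu

/-- `u^n`: the `n`-fold concatenation of `u`. -/
def listPow (u : List A) (n : ℕ) : List A := (List.replicate n u).flatten

/-!
Suppose `uv ∼_N w ≠ uv`. By Simon's lemma, `uv` and `w` have a common supersequence that is still
`∼_N uv`; walking one letter towards it (or, if it is `uv` itself, one letter from `uv` towards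
`w`) yields a one-letter insertion `XY ↦ XcY` with `XY ∼_N XcY` and `uv ∈ {XY, XcY}`.
Take shortest `P ≼ X`, `Q ≼ Y` with `Pc ⋠ X` and `cQ ⋠ Y`: then `XY ∼_{|P|+|Q|} XcY`, so the
separating subword `PcQ` has length at most `h(XY)` and `h(XcY)`. In a context `u₀ · _ · v₀` it
stays separating once padded by subwords of length `ρ(u₀)`, `ρ(v₀)` witnessing that dropping the
last letter of `u₀`, resp. the first letter of `v₀`, is detected. With the letter `c` in `u` this
separates at length `h(u) + ρ(v)`, with `c` in `v` at length `ρ(u) + h(v)`.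
-/

namespace List

variable {α : Type*}

theorem concat_sublist_or_cons_sublist_of_sublist_append {P Q X Y : List α} {d : α}
    (h : P ++ d :: Q <+ X ++ Y) : P ++ [d] <+ X ∨ d :: Q <+ Y := by
  obtain ⟨m, n, hmn, hm, hn⟩ := sublist_append_iff.mp h
  rcases append_eq_append_iff.mp hmn with ⟨t, rfl, ht⟩ | ⟨t, rfl, rfl⟩
  · cases t with
    | nil => exact Or.inr (by simpa [ht] using hn)
    | cons e t =>
      obtain ⟨rfl, -⟩ := cons_eq_cons.mp ht
      exact Or.inl ((sublist_append_left (P ++ [d]) t).trans (by simpa using hm))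
  · exact Or.inr ((sublist_append_right t _).trans hn)

theorem sublist_or_sublist_of_append_sublist_append_cons {S T X Y : List α} {b : α}
    (h : S ++ T <+ X ++ b :: Y) : S <+ X ∨ T <+ Y := by
  rcases S.eq_nil_or_concat' with rfl | ⟨S, e, rfl⟩
  · exact Or.inl (nil_sublist X)
  · rw [append_assoc, singleton_append] at h
    exact (concat_sublist_or_cons_sublist_of_sublist_append h).imp id Sublist.of_cons_cons

theorem Sublist.exists_deletion_of_ne {w x : List α} (h : w <+ x) (hne : w ≠ x) :
    ∃ X c Y, x = X ++ c :: Y ∧ w <+ X ++ Y := by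
  induction h with
  | slnil => exact absurd rfl hne
  | @cons l₁ l₂ a h _ => exact ⟨[], a, l₂, rfl, h⟩
  | @cons_cons l₁ l₂ a _ ih =>
    obtain ⟨X, c, Y, rfl, hsub⟩ := ih fun h => hne (h ▸ rfl)
    exact ⟨a :: X, c, Y, rfl, hsub.cons_cons a⟩

theorem Sublist.exists_insertion_of_ne {x z : List α} (h : x <+ z) (hne : x ≠ z) :
    ∃ X c Y, x = X ++ Y ∧ X ++ c :: Y <+ z := by
  induction h with
  | slnil => exact absurd rfl hne
  | @cons l₁ l₂ a h ih =>
    by_cases he : l₁ = l₂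
    · exact ⟨[], a, l₁, rfl, he ▸ Sublist.refl _⟩
    · obtain ⟨X, c, Y, hX, hsub⟩ := ih he
      exact ⟨X, c, Y, hX, hsub.cons a⟩
  | @cons_cons l₁ l₂ a _ ih =>
    obtain ⟨X, c, Y, rfl, hsub⟩ := ih fun h => hne (h ▸ rfl)
    exact ⟨a :: X, c, Y, rfl, hsub.cons_cons a⟩

end List

open List

namespace SimonCong

theorem refl (n : ℕ) (u : List A) : SimonCong n u u := fun _ _ => Iff.rfl

theorem symm {n : ℕ} {u v : List A} (h : SimonCong n u v) : SimonCong n v u :=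
  fun s hs => (h s hs).symm

theorem trans {n : ℕ} {u v w : List A} (h₁ : SimonCong n u v) (h₂ : SimonCong n v w) :
    SimonCong n u w := fun s hs => (h₁ s hs).trans (h₂ s hs)

theorem mono {m n : ℕ} {u v : List A} (h : SimonCong n u v) (hmn : m ≤ n) : SimonCong m u v :=
  fun s hs => h s (hs.trans hmn)

theorem reverse {n : ℕ} {u v : List A} (h : SimonCong n u v) :
    SimonCong n u.reverse v.reverse := fun s hs => by
  simpa only [← reverse_sublist (l₁ := s), reverse_reverse] using h s.reverse (by simpa using hs)

theorem of_sublist_of_sublist {n : ℕ} {x y z : List A} (h : SimonCong n x z) (hxy : x <+ y)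
    (hyz : y <+ z) : SimonCong n x y :=
  fun s hs => ⟨fun hs' => hs'.trans hxy, fun hs' => (h s hs).mpr (hs'.trans hyz)⟩

theorem exists_sublist_not_sublist {n : ℕ} {x y : List A} (hxy : x <+ y)
    (h : ¬ SimonCong n x y) : ∃ s, s.length ≤ n ∧ s <+ y ∧ ¬ s <+ x := by
  by_contra! hc
  exact h fun s hs => ⟨fun h' => h'.trans hxy, hc s hs⟩

end SimonCong

theorem exists_witness_of_not_simonCong_insert {n : ℕ} {q y : List A} {b : A}
    (h : ¬ SimonCong n (q ++ y) (q ++ b :: y)) :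
    ∃ m r, m <+ q ∧ r <+ y ∧ (m ++ b :: r).length ≤ n ∧ ¬ m ++ b :: r <+ q ++ y := by
  obtain ⟨s, hs, hsub, hns⟩ := SimonCong.exists_sublist_not_sublist (by simp) h
  obtain ⟨m, t, rfl, hm, ht⟩ := sublist_append_iff.mp hsub
  obtain ht | ⟨r, rfl, hr⟩ := sublist_cons_iff.mp ht
  · exact absurd (hm.append ht) hns
  · exact ⟨m, r, hm, hr, hs, hns⟩

theorem sublist_of_simonCong_cons_cons {n : ℕ} {q u v m r : List A} {a b : A} (hab : a ≠ b)
    (H : SimonCong n (q ++ a :: u) (q ++ b :: v)) (hm : m <+ q) (hmb : ¬ m ++ [b] <+ q)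
    (hr : r <+ b :: v) (hlen : m.length + 1 + r.length ≤ n) : r <+ u := by
  obtain ⟨r', hrr', hr'v, hlen'⟩ : ∃ r', r <+ b :: r' ∧ r' <+ v ∧ r'.length ≤ r.length := by
    obtain hr | ⟨r', rfl, hr'⟩ := sublist_cons_iff.mp hr
    · exact ⟨r, sublist_cons_self b r, hr, le_rfl⟩
    · exact ⟨r', Sublist.refl _, hr', by simp⟩
  have hq : m ++ b :: r' <+ q ++ a :: u :=
    (H _ (by simp only [length_append, length_cons]; omega)).mpr
      (hm.append (cons_sublist_cons.mpr hr'v))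
  obtain h | h := concat_sublist_or_cons_sublist_of_sublist_append hq
  · exact absurd h hmb
  · exact hrr'.trans (h.of_cons_of_ne hab.symm)

/-- Simon's lemma, in the form relative to a common prefix `q`. -/
theorem simonCong_insert_or_simonCong_insert {n : ℕ} {q u v : List A} {a b : A} (hab : a ≠ b)
    (H : SimonCong n (q ++ a :: u) (q ++ b :: v)) :
    SimonCong n (q ++ a :: u) (q ++ b :: a :: u) ∨
      SimonCong n (q ++ b :: v) (q ++ a :: b :: v) := by
  by_contra! hc
  obtain ⟨m₁, r₁, hm₁, hr₁, hlen₁, h₁⟩ := exists_witness_of_not_simonCong_insert hc.1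
  obtain ⟨m₂, r₂, hm₂, hr₂, hlen₂, h₂⟩ := exists_witness_of_not_simonCong_insert hc.2
  have hm₁b : ¬ m₁ ++ [b] <+ q := fun h => h₁ (by simpa using h.append hr₁)
  have hm₂a : ¬ m₂ ++ [a] <+ q := fun h => h₂ (by simpa using h.append hr₂)
  have hr₁v : ¬ r₁ <+ v := fun h => h₁ ((H _ hlen₁).mpr (hm₁.append (cons_sublist_cons.mpr h)))
  have hr₂u : ¬ r₂ <+ u := fun h => h₂ ((H _ hlen₂).mp (hm₂.append (cons_sublist_cons.mpr h)))
  simp only [length_append, length_cons] at hlen₁ hlen₂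
  -- the witness with the shorter tail fits into the length budget of the other one
  rcases le_total r₂.length r₁.length with hle | hle
  · exact hr₂u (sublist_of_simonCong_cons_cons hab H hm₁ hm₁b hr₂ (by omega))
  · exact hr₁v (sublist_of_simonCong_cons_cons hab.symm H.symm hm₂ hm₂a hr₁ (by omega))

theorem exists_supersequence_simonCong {n : ℕ} :
    ∀ q u v : List A, SimonCong n (q ++ u) (q ++ v) →
      ∃ z, u <+ z ∧ v <+ z ∧ SimonCong n (q ++ u) (q ++ z)
  | _, [], v, H => ⟨v, nil_sublist v, Sublist.refl v, H⟩
  | _, a :: u, [], _ => ⟨a :: u, Sublist.refl _, nil_sublist _, SimonCong.refl _ _⟩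
  | q, a :: u, b :: v, H => by
    by_cases hab : a = b
    · subst hab
      obtain ⟨z, hu, hv, hz⟩ := exists_supersequence_simonCong (q ++ [a]) u v (by simpa using H)
      exact ⟨a :: z, hu.cons_cons a, hv.cons_cons a, by simpa using hz⟩
    rcases simonCong_insert_or_simonCong_insert hab H with hc | hc
    · obtain ⟨z, hu, hv, hz⟩ :=
        exists_supersequence_simonCong (q ++ [b]) (a :: u) v (by simpa using hc.symm.trans H)
      exact ⟨b :: z, hu.cons b, hv.cons_cons b, hc.trans (by simpa using hz)⟩
    · obtain ⟨z, hu, hv, hz⟩ :=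
        exists_supersequence_simonCong (q ++ [a]) u (b :: v) (by simpa using H.trans hc)
      exact ⟨a :: z, hu.cons_cons a, hv.cons a, by simpa using hz⟩
termination_by _ u v => u.length + v.length

theorem exists_insert_simonCong_of_simonCong {n : ℕ} {x w : List A} (h : SimonCong n x w)
    (hne : w ≠ x) :
    ∃ X Y c, (x = X ++ Y ∨ x = X ++ c :: Y) ∧ SimonCong n (X ++ Y) (X ++ c :: Y) := by
  obtain ⟨z, hxz, hwz, hz⟩ := exists_supersequence_simonCong [] x w (by simpa using h)
  simp only [nil_append] at hz
  by_cases hzx : z = x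
  · subst hzx
    obtain ⟨X, c, Y, rfl, hw⟩ := hwz.exists_deletion_of_ne hne
    exact ⟨X, Y, c, Or.inr rfl, (h.trans (h.symm.of_sublist_of_sublist hw (by simp))).symm⟩
  · obtain ⟨X, c, Y, rfl, hz'⟩ := hxz.exists_insertion_of_ne (Ne.symm hzx)
    exact ⟨X, Y, c, Or.inl rfl, hz.of_sublist_of_sublist (by simp) hz'⟩

theorem eq_of_simonCong_length_add_one {u v : List A} (h : SimonCong (u.length + 1) u v) :
    v = u := by
  have huv : u <+ v := (h u (Nat.le_succ _)).mp (Sublist.refl u)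
  by_contra hne
  have hlt : u.length < v.length :=
    lt_of_le_of_ne huv.length_le fun hl => hne (huv.eq_of_length_le hl.ge).symm
  have hlen : (v.take (u.length + 1)).length = u.length + 1 := by
    rw [length_take]; omega
  have := ((h _ hlen.le).mpr (take_prefix _ v).sublist).length_le
  omega

theorem eq_of_simonCong_pcHeight {u v : List A} (h : SimonCong (pcHeight u) u v) : v = u :=
  Nat.sInf_mem (s := {n | ∀ v, SimonCong n u v → v = u})
    ⟨_, fun _ => eq_of_simonCong_length_add_one⟩ v h

theorem lt_pcHeight_of_simonCong {n : ℕ} {u v : List A} (h : SimonCong n u v) (hne : v ≠ u) :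
    n < pcHeight u := by
  by_contra! hle
  exact hne (eq_of_simonCong_pcHeight (h.mono hle))

theorem reduced_length (u : List A) : Reduced u.length u := fun _ hsub hne h =>
  hne (hsub.eq_of_length_le ((h u le_rfl).mp (Sublist.refl u)).length_le)

theorem reduced_pcRho (u : List A) : Reduced (pcRho u) u :=
  Nat.sInf_mem (s := {m | Reduced m u}) ⟨_, reduced_length u⟩

theorem pcRho_nil : pcRho ([] : List A) = 0 :=
  Nat.sInf_eq_zero.mpr <| Or.inl fun _ hsub hne _ => hne (sublist_nil.mp hsub)

theorem exists_sublist_not_sublist_length_le_pcRho {u u' : List A} (hsub : u' <+ u)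
    (hne : u' ≠ u) : ∃ s, s <+ u ∧ ¬ s <+ u' ∧ s.length ≤ pcRho u := by
  obtain ⟨s, hs, hsu, hsu'⟩ :=
    SimonCong.exists_sublist_not_sublist hsub fun h => reduced_pcRho u u' hsub hne h.symm
  exact ⟨s, hsu, hsu', hs⟩

theorem exists_simonCong_cons (Y : List A) (c : A) :
    ∃ Q, Q <+ Y ∧ ¬ c :: Q <+ Y ∧ SimonCong Q.length Y (c :: Y) := by
  classical
  have hex : ∃ k, ¬ SimonCong k Y (c :: Y) :=
    ⟨Y.length + 1, fun h => by simpa using ((h (c :: Y) le_rfl).mpr (Sublist.refl _)).length_le⟩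
  obtain ⟨s, hs, hsY, hsY'⟩ :=
    SimonCong.exists_sublist_not_sublist (sublist_cons_self c Y) (Nat.find_spec hex)
  obtain hs' | ⟨Q, rfl, hQ⟩ := sublist_cons_iff.mp hsY
  · exact absurd hs' hsY'
  · refine ⟨Q, hQ, hsY', ?_⟩
    by_contra h
    have := Nat.find_min' hex h
    simp only [length_cons] at hs
    omega

theorem exists_simonCong_concat (X : List A) (c : A) :
    ∃ P, P <+ X ∧ ¬ P ++ [c] <+ X ∧ SimonCong P.length X (X ++ [c]) := by
  obtain ⟨Q, hQ, hcQ, h⟩ := exists_simonCong_cons X.reverse c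
  refine ⟨Q.reverse, by simpa using reverse_sublist.mpr hQ, fun hP => hcQ ?_, ?_⟩
  · simpa using reverse_sublist.mpr hP
  · simpa using h.reverse

theorem simonCong_append_insert {k₁ k₂ : ℕ} {X Y : List A} {c : A}
    (h₁ : SimonCong k₁ X (X ++ [c])) (h₂ : SimonCong k₂ Y (c :: Y)) :
    SimonCong (k₁ + k₂) (X ++ Y) (X ++ c :: Y) := by
  refine SimonCong.symm fun s hs => ⟨fun h => ?_, fun h => h.trans (by simp)⟩
  obtain ⟨m, n, rfl, hm, hn⟩ := sublist_append_iff.mp h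
  obtain hn | ⟨Q, rfl, hQ⟩ := sublist_cons_iff.mp hn
  · exact hm.append hn
  simp only [length_append, length_cons] at hs
  by_cases hmk : m.length < k₁
  · have hmc : m ++ [c] <+ X :=
      (h₁ _ (by simp; omega)).mpr (hm.append (Sublist.refl [c]))
    simpa using hmc.append hQ
  · exact hm.append ((h₂ (c :: Q) (by simp; omega)).mpr (cons_sublist_cons.mpr hQ))

theorem exists_sublist_insert_not_sublist (X Y : List A) (c : A) :
    ∃ W, W <+ X ++ c :: Y ∧ ¬ W <+ X ++ Y ∧
      W.length ≤ min (pcHeight (X ++ Y)) (pcHeight (X ++ c :: Y)) := by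
  obtain ⟨P, hP, hPc, h₁⟩ := exists_simonCong_concat X c
  obtain ⟨Q, hQ, hcQ, h₂⟩ := exists_simonCong_cons Y c
  have h := simonCong_append_insert h₁ h₂
  have hne : X ++ c :: Y ≠ X ++ Y := by simp
  refine ⟨P ++ c :: Q, hP.append (cons_sublist_cons.mpr hQ), fun hW => ?_, ?_⟩
  · exact (concat_sublist_or_cons_sublist_of_sublist_append hW).elim hPc hcQ
  · have := lt_pcHeight_of_simonCong h hne
    have := lt_pcHeight_of_simonCong h.symm hne.symm
    simp only [length_append, length_cons]
    omega

theorem exists_not_sublist_append_left {W x : List A} (hW : ¬ W <+ x) (u : List A) :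
    ∃ s, s <+ u ∧ s.length ≤ pcRho u ∧ ¬ s ++ W <+ u ++ x := by
  rcases u.eq_nil_or_concat' with rfl | ⟨u', d, rfl⟩
  · exact ⟨[], Sublist.refl _, by simp, by simpa using hW⟩
  obtain ⟨s, hs, hsu', hlen⟩ :=
    exists_sublist_not_sublist_length_le_pcRho (sublist_append_left u' [d]) (by simp)
  refine ⟨s, hs, hlen, fun h => ?_⟩
  rw [append_assoc, singleton_append] at h
  exact (sublist_or_sublist_of_append_sublist_append_cons h).elim hsu' hW

theorem exists_not_sublist_append_right {W x : List A} (hW : ¬ W <+ x) (v : List A) :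
    ∃ s, s <+ v ∧ s.length ≤ pcRho v ∧ ¬ W ++ s <+ x ++ v := by
  rcases v with _ | ⟨b, v'⟩
  · exact ⟨[], Sublist.refl _, by simp, by simpa using hW⟩
  obtain ⟨s, hs, hsv', hlen⟩ :=
    exists_sublist_not_sublist_length_le_pcRho (sublist_cons_self b v') (by simp)
  exact ⟨s, hs, hlen, fun h => (sublist_or_sublist_of_append_sublist_append_cons h).elim hW hsv'⟩

theorem not_simonCong_append_insert_append (u X Y v : List A) (c : A) :
    ¬ SimonCong (pcRho u + min (pcHeight (X ++ Y)) (pcHeight (X ++ c :: Y)) + pcRho v)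
      (u ++ (X ++ Y) ++ v) (u ++ (X ++ c :: Y) ++ v) := by
  obtain ⟨W, hW, hW', hWlen⟩ := exists_sublist_insert_not_sublist X Y c
  obtain ⟨s, hs, hslen, hs'⟩ := exists_not_sublist_append_left hW' u
  obtain ⟨t, ht, htlen, ht'⟩ := exists_not_sublist_append_right hs' v
  intro h
  refine ht' ((h _ ?_).mpr ((hs.append hW).append ht))
  simp only [length_append]
  omega

theorem not_simonCong_insert_of_append_eq {u v X Y : List A} {c : A}
    (h : u ++ v = X ++ Y ∨ u ++ v = X ++ c :: Y) :
    ¬ SimonCong (max (pcHeight u + pcRho v) (pcRho u + pcHeight v)) (X ++ Y) (X ++ c :: Y) := by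
  have in_left : ∀ Y', (u = X ++ Y' ∨ u = X ++ c :: Y') → Y = Y' ++ v →
      ¬ SimonCong (max (pcHeight u + pcRho v) (pcRho u + pcHeight v)) (X ++ Y) (X ++ c :: Y) := by
    rintro Y' hu rfl hN
    have := not_simonCong_append_insert_append [] X Y' v c
    simp only [pcRho_nil, zero_add, nil_append, append_assoc, cons_append] at this
    exact this (hN.mono (by rcases hu with rfl | rfl <;> omega))
  have in_right : ∀ X', (v = X' ++ Y ∨ v = X' ++ c :: Y) → X = u ++ X' →
      ¬ SimonCong (max (pcHeight u + pcRho v) (pcRho u + pcHeight v)) (X ++ Y) (X ++ c :: Y) := by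
    rintro X' hv rfl hN
    have := not_simonCong_append_insert_append u X' Y [] c
    simp only [pcRho_nil, add_zero, append_nil] at this
    rw [append_assoc, append_assoc] at hN
    exact this (hN.mono (by rcases hv with rfl | rfl <;> omega))
  rcases h with h | h <;> obtain ⟨t, hX, ht⟩ | ⟨t, hu, ht⟩ := append_eq_append_iff.mp h
  · exact in_right t (Or.inl ht) hX
  · exact in_left t (Or.inl hu) ht
  · exact in_right t (Or.inr ht) hX
  · rcases t with _ | ⟨e, t⟩
    · exact in_right [] (Or.inr ht.symm) (by simpa using hu.symm)
    · obtain ⟨rfl, rfl⟩ := cons_eq_cons.mp ht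
      exact in_left t (Or.inr hu) rfl

theorem stmt5_general {A : Type*} (u v : List A) :
    pcHeight (u ++ v) ≤ max (pcHeight u + pcRho v) (pcRho u + pcHeight v) := by
  refine Nat.sInf_le fun w hw => ?_
  by_contra hne
  obtain ⟨X, Y, c, huv, hXY⟩ := exists_insert_simonCong_of_simonCong hw hne
  exact not_simonCong_insert_of_append_eq huv hXY

/-- convexity of `h` w.r.t. concatenation. -/
theorem stmt5 {A : Type*} [Fintype A] (u v : List A) :
    pcHeight (u ++ v) ≤ max (pcHeight u + pcRho v) (pcRho u + pcHeight v) :=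
  stmt5_general u v
end

section
/- Let A be a finite alphabet. For any word u over A, any letter a ∈ A, and any A-arch s, r(s·u, a) = 1 + r(u, a). -/
variable {A : Type*}

/-!
Write the arch as `s = s' b` with `b ∉ s'`. Then `s u ∼_{k+1} s v ↔ u ∼_k v`: a subword of `s u` of
length `k + 1` can always put its first letter into `s`, because `s` contains every letter, and
conversely `w ≼ u` gives `b w ≼ s u`, where `b` can only be matched at the end of `s`. Hence
`δ(s u, s v) = 1 + δ(u, v)`, and the theorem is the case `v = u a`.
-/

theorem SimonCong.mono_s14 {u v : List A} {j k : ℕ} (h : j ≤ k) (hc : SimonCong k u v) :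
    SimonCong j u v :=
  fun w hw => hc w (hw.trans h)

theorem simonCong_zero (u v : List A) : SimonCong 0 u v := by
  intro w hw
  simp [List.length_eq_zero_iff.mp (Nat.le_zero.mp hw)]

theorem natCast_le_sdelta_iff {u v : List A} {k : ℕ} :
    (k : ℕ∞) ≤ sdelta u v ↔ SimonCong k u v := by
  refine ⟨fun hk => ?_, fun hk => le_sSup ⟨k, rfl, hk⟩⟩
  by_contra hnot
  -- the orders at which the congruence holds form an initial segment of ℕ, so they stay below `k`
  have hbound : sdelta u v ≤ (k - 1 : ℕ) := by
    refine sSup_le ?_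
    rintro _ ⟨j, rfl, hj⟩
    have hjk : j < k := lt_of_not_ge fun hkj => hnot (hj.mono_s14 hkj)
    exact_mod_cast Nat.le_sub_one_of_lt hjk
  have hk0 : k ≠ 0 := fun h => hnot (h ▸ simonCong_zero u v)
  have hkle := hk.trans hbound
  norm_cast at hkle
  omega

theorem sdelta_eq_one_add {u v u' v' : List A}
    (h : ∀ k, SimonCong (k + 1) u' v' ↔ SimonCong k u v) :
    sdelta u' v' = 1 + sdelta u v := by
  refine ENat.eq_of_forall_natCast_le_iff fun n => ?_
  rcases n with _ | k
  · simp
  · rw [natCast_le_sdelta_iff, h, ← natCast_le_sdelta_iff, Nat.cast_succ, add_comm,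
      ENat.add_le_add_iff_left ENat.one_ne_top]

theorem List.Sublist.of_cons_sublist_append_cons_of_notMem {b : A} {w s v : List A}
    (hb : b ∉ s) (h : (b :: w).Sublist (s ++ b :: v)) : w.Sublist v := by
  induction s with
  | nil => exact List.cons_sublist_cons.mp h
  | cons c s ih =>
    rcases List.sublist_cons_iff.mp h with h | ⟨_, heq, _⟩
    · exact ih (fun hs => hb (List.mem_cons_of_mem c hs)) h
    · exact absurd (List.mem_cons.mpr (.inl (List.cons.inj heq).1)) hb

theorem SimonCong.append_left_succ {s u v : List A} {k : ℕ} (hs : ∀ c, c ∈ s)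
    (h : SimonCong k u v) : SimonCong (k + 1) (s ++ u) (s ++ v) := by
  suffices key : ∀ {u v}, SimonCong k u v → ∀ w : List A, w.length ≤ k + 1 →
      w.Sublist (s ++ u) → w.Sublist (s ++ v) from
    fun w hw => ⟨key h w hw, key (fun w hw => (h w hw).symm) w hw⟩
  intro u v h w hw hwu
  obtain ⟨x, y, rfl, hx, hy⟩ := List.sublist_append_iff.mp hwu
  rcases x with _ | ⟨c, x⟩
  · rcases y with _ | ⟨c, y⟩
    · exact List.nil_sublist _
    have hyv : y.Sublist v := (h y (by simpa using hw)).mp ((List.sublist_cons_self c y).trans hy)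
    exact List.singleton_append ▸ (List.singleton_sublist.mpr (hs c)).append hyv
  · exact hx.append ((h y (by simp at hw; omega)).mp hy)

theorem SimonCong.of_append_left_succ {s u v : List A} {b : A} {k : ℕ} (hb : b ∉ s)
    (h : SimonCong (k + 1) (s ++ b :: u) (s ++ b :: v)) : SimonCong k u v := by
  suffices key : ∀ {u v}, SimonCong (k + 1) (s ++ b :: u) (s ++ b :: v) →
      ∀ w : List A, w.length ≤ k → w.Sublist u → w.Sublist v from
    fun w hw => ⟨key h w hw, key (fun w hw => (h w hw).symm) w hw⟩
  intro u v h w hw hwu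
  refine List.Sublist.of_cons_sublist_append_cons_of_notMem hb <| (h (b :: w) (by simpa)).mp ?_
  exact (List.cons_sublist_cons.mpr hwu).trans (List.sublist_append_right s _)

theorem IsArch.exists_eq_append_singleton_notMem [Fintype A] {s : List A} (hs : IsArch A s)
    (hne : s ≠ []) : ∃ s' b, s = s' ++ [b] ∧ b ∉ s' := by
  obtain ⟨s', b, rfl⟩ := List.eq_nil_or_concat' s |>.resolve_left hne
  obtain ⟨c, hc⟩ := hs.2 s' (List.prefix_append _ _) (by simp)
  rcases List.mem_append.mp (hs.1 c) with hcs | hcb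
  · exact absurd hcs hc
  · exact ⟨s', b, rfl, List.mem_singleton.mp hcb ▸ hc⟩

theorem IsArch.simonCong_succ_append_iff [Fintype A] {s u v : List A} (hs : IsArch A s)
    (hne : s ≠ []) (k : ℕ) : SimonCong (k + 1) (s ++ u) (s ++ v) ↔ SimonCong k u v := by
  obtain ⟨s', b, rfl, hb⟩ := hs.exists_eq_append_singleton_notMem hne
  refine ⟨fun h => .of_append_left_succ hb ?_, .append_left_succ hs.1⟩
  simpa only [List.append_assoc, List.singleton_append] using h

theorem IsArch.sdelta_append [Fintype A] {s : List A} (hs : IsArch A s) (hne : s ≠ [])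
    (u v : List A) : sdelta (s ++ u) (s ++ v) = 1 + sdelta u v :=
  sdelta_eq_one_add (hs.simonCong_succ_append_iff hne)

/-- prepending an arch shifts `r` by one. -/
theorem stmt14 {A : Type*} [Fintype A] (u : List A) (a : A) (s : List A)
    (hs : IsArch A s) :
    rdist (s ++ u) [a] = 1 + rdist u [a] := by
  rw [rdist, rdist, List.append_assoc]
  exact hs.sdelta_append (List.ne_nil_of_mem (hs.1 a)) u (u ++ [a])
end
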